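/- Define the depth of reverse handlers d(P) for commands by: d(ret M) = 0, d(Op(M)) = 0, d(let x ⇐ P in Q) = max(d(P), d(Q)), d(rev handle(M)⟨xᵢ⟩.R with H) = 1 + max(d(R), d(H)), and d(H) for a handler as the maximum of the depths of its constituent commands. Then for the rewriting operation RH_{V,H}(⟨yⱼ⟩.P) defined by the recursion of the operational semantics, d(RH_{V,H}(⟨yⱼ⟩.P)) ≤ d(P) + d(H); in particular d(rev handle(V)⟨yᵢ⟩.P with H) > d(RH_{V,H}(⟨yᵢ⟩.P)). -/
import Mathlib


/-- Terms of the differentiable language (de Bruijn indices; `tlet` and the middle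
argument of `rd` bind one variable). -/
inductive Tm : Type
  | var : ℕ → Tm
  | const : ℕ → Tm
  | app : ℕ → Tm → Tm
  | plus : Tm → Tm → Tm
  | pair : Tm → Tm → Tm
  | proj : ℕ → Tm → Tm
  | tlet : Tm → Tm → Tm
  | rd : Tm → Tm → Tm → Tm

mutual
/-- Commands: `ret M`, operation calls `op o M`, sequencing
`clet P Q` (i.e. `let x ⇐ P in Q`, with `Q` binding one variable), and
reverse handling `rhandle M R H` (with `R` binding one variable). -/
inductive Cmd : Type
  | ret : Tm → Cmd
  | op : ℕ → Tm → Cmd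
  | clet : Cmd → Cmd → Cmd
  | rhandle : Tm → Cmd → Handler → Cmd
/-- A reverse handler: a return clause together with, for each operation symbol, a
forward clause `Qf` and a backward clause `Qb`. -/
inductive Handler : Type
  | retClauseOnly : Cmd → Handler
  | cons : ℕ → Cmd → Cmd → Handler → Handler
end

mutual
/-- Depth of reverse handlers in a command (Definition 3.5 of the paper):
`d(ret M) = 0`, `d(Op(M)) = 0`, `d(let x ⇐ P in Q) = max(d P, d Q)`,
`d(rev handle(M)⟨x⟩.R with H) = 1 + max(d R, d H)`. -/
def Cmd.depth : Cmd → ℕ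
  | .ret _ => 0
  | .op _ _ => 0
  | .clet p q => max p.depth q.depth
  | .rhandle _ r h => 1 + max r.depth h.depth
/-- Depth of a handler: the maximum of the depths of its constituent commands. -/
def Handler.depth : Handler → ℕ
  | .retClauseOnly p => p.depth
  | .cons _ qf qb h => max qf.depth (max qb.depth h.depth)
end

def Handler.retClause : Handler → Cmd
  | .retClauseOnly p => p
  | .cons _ _ _ h => h.retClause

def Handler.lookup : Handler → ℕ → Option (Cmd × Cmd)
  | .retClauseOnly _, _ => none
  | .cons o qf qb h, n => if o = n then some (qf, qb) else h.lookup n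

def Tm.rename (f : ℕ → ℕ) : Tm → Tm
  | .var n => .var (f n)
  | .const c => .const c
  | .app g a => .app g (a.rename f)
  | .plus a b => .plus (a.rename f) (b.rename f)
  | .pair a b => .pair (a.rename f) (b.rename f)
  | .proj i a => .proj i (a.rename f)
  | .tlet a b => .tlet (a.rename f)
      (b.rename fun k => match k with | 0 => 0 | k + 1 => f k + 1)
  | .rd a b c => .rd (a.rename f)
      (b.rename fun k => match k with | 0 => 0 | k + 1 => f k + 1) (c.rename f)

/-- Lifting a parallel substitution under one binder. -/
def liftSub (σ : ℕ → Tm) : ℕ → Tm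
  | 0 => .var 0
  | k + 1 => (σ k).rename (· + 1)

def Tm.sub (σ : ℕ → Tm) : Tm → Tm
  | .var n => σ n
  | .const c => .const c
  | .app g a => .app g (a.sub σ)
  | .plus a b => .plus (a.sub σ) (b.sub σ)
  | .pair a b => .pair (a.sub σ) (b.sub σ)
  | .proj i a => .proj i (a.sub σ)
  | .tlet a b => .tlet (a.sub σ) (b.sub (liftSub σ))
  | .rd a b c => .rd (a.sub σ) (b.sub (liftSub σ)) (c.sub σ)

def Cmd.sub (σ : ℕ → Tm) : Cmd → Cmd
  | .ret m => .ret (m.sub σ)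
  | .op o m => .op o (m.sub σ)
  | .clet p q => .clet (p.sub σ) (q.sub (liftSub σ))
  | .rhandle m r h => .rhandle (m.sub σ) (r.sub (liftSub σ)) h

/-- Substitution of a single value for the most recent variable. -/
def sub1 (V : Tm) : ℕ → Tm
  | 0 => V
  | k + 1 => .var k

/-- Evaluation contexts `F^c ::= [] | let x ⇐ F^c in Q`, represented by the list of
their let-bodies, and the plugging operation. -/
def plug : List Cmd → Cmd → Cmd
  | [], c => c
  | q :: E, c => plug E (.clet c q)

/-- The head of a term context `F^t`: a command former with a term hole
(`ret [−]`, `Op([−])`, or `rev handle([−])⟨x⟩.R with H`). -/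
inductive TCtx : Type
  | retC : TCtx
  | opC : ℕ → TCtx
  | rhC : Cmd → Handler → TCtx

def TCtx.fill : TCtx → Tm → Cmd
  | .retC, m => .ret m
  | .opC o, m => .op o m
  | .rhC r h, m => .rhandle m r h

/-- The rewriting operation `RH_{V,H}(⟨y⟩.P)` of the operational semantics of reverse
handlers, presented as an inductive relation whose constructors are the defining
recursive equations (Fig. "rewriting rules for reverse handlers"): the return-variable
case, the pure-`let` case, the operation case (which inserts the forward clause `Qf`
before and the backward clause `Qb` after the recursively rewritten continuation), the
nested-handler case, and the pure-term case (which uses the reverse derivative `rd`). -/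
inductive Rw : Tm → Handler → Cmd → Cmd → Prop
  | ret_var (V : Tm) (H : Handler) :
      Rw V H (.ret (.var 0))
        (.clet (H.retClause.sub (sub1 V)) (.ret (.var 0)))
  | pure_let (V : Tm) (H : Handler) (E : List Cmd) (j : ℕ) (R P' : Cmd) :
      Rw V H (plug E (R.sub (sub1 (.var j)))) P' →
      Rw V H (plug E (.clet (.ret (.var j)) R)) P'
  | opc (V : Tm) (H : Handler) (E : List Cmd) (o : ℕ) (Qf Qb K : Cmd) :
      H.lookup o = some (Qf, Qb) →
      Rw (Tm.pair (.var 0) V) H (plug E (.ret (.var 0))) K →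
      Rw V H (plug E (.op o (.var 0)))
        (.clet (Qf.sub (sub1 V))
          (.clet K (.clet (Qb.sub (sub1 V)) (.ret (.plus (.var 0) (.var 1))))))
  | nested (V W : Tm) (H H' : Handler) (E : List Cmd) (R K P' : Cmd) :
      Rw W H' R K →
      Rw V H (plug E K) P' →
      Rw V H (plug E (.rhandle W R H')) P'
  | tmc (V : Tm) (H : Handler) (E : List Cmd) (F : TCtx) (M : Tm) (K : Cmd) :
      (∀ n, M ≠ .var n) →
      Rw (Tm.pair (.var 0) V) H (plug E (F.fill (.var 0))) K →
      Rw V H (plug E (F.fill M))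
        (.clet (.ret (M.sub (sub1 V)))
          (.clet K (.ret (.plus (.var 0) (.rd (.var 1) M V)))))

theorem sub_depth : ∀ (σ : ℕ → Tm) (c : Cmd), (Cmd.sub σ c).depth = c.depth
  | _, .ret _ => rfl
  | _, .op _ _ => rfl
  | σ, .clet p q => by
      simp [Cmd.sub, Cmd.depth, sub_depth σ p, sub_depth (liftSub σ) q]
  | σ, .rhandle m r h => by
      simp [Cmd.sub, Cmd.depth, sub_depth (liftSub σ) r]

def edepth (E : List Cmd) : ℕ := E.foldr (fun q a => max q.depth a) 0

theorem plug_depth : ∀ (E : List Cmd) (c : Cmd),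
    (plug E c).depth = max c.depth (edepth E)
  | [], c => by simp [plug, edepth]
  | q :: E, c => by
      simp only [plug, plug_depth E, Cmd.depth, edepth, List.foldr_cons]
      omega

theorem retClause_depth : ∀ (H : Handler), H.retClause.depth ≤ H.depth
  | .retClauseOnly p => le_refl _
  | .cons _ _ _ h => by
      have := retClause_depth h
      simp only [Handler.retClause, Handler.depth]
      omega

theorem lookup_depth : ∀ (H : Handler) (o : ℕ) (qf qb : Cmd),
    H.lookup o = some (qf, qb) → qf.depth ≤ H.depth ∧ qb.depth ≤ H.depth
  | .retClauseOnly _, _, _, _, h => by simp [Handler.lookup] at h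
  | .cons o' qf' qb' h, o, qf, qb, hl => by
      by_cases he : o' = o
      · simp [Handler.lookup, he] at hl
        simp [Handler.depth, hl.1, hl.2]
      · simp [Handler.lookup, he] at hl
        have := lookup_depth h o qf qb hl
        simp [Handler.depth]
        omega

theorem fill_depth (F : TCtx) (m m' : Tm) :
    (F.fill m).depth = (F.fill m').depth := by
  cases F <;> rfl

theorem rw_depth_aux (V : Tm) (H : Handler) (P P' : Cmd) (h : Rw V H P P') :
    P'.depth ≤ max P.depth H.depth := by
  induction h with
  | ret_var V H =>
      have := retClause_depth H
      simp [Cmd.depth, sub_depth]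
      omega
  | pure_let V H E j R P' _ ih =>
      simp only [plug_depth, sub_depth, Cmd.depth] at *
      omega
  | opc V H E o Qf Qb K hl _ ih =>
      have h2 := lookup_depth H o Qf Qb hl
      simp only [plug_depth, Cmd.depth, sub_depth] at *
      omega
  | nested V W H H' E R K P' _ _ ih1 ih2 =>
      simp only [plug_depth, Cmd.depth] at *
      omega
  | tmc V H E F M K _ _ ih =>
      simp only [plug_depth, Cmd.depth] at *
      rw [fill_depth F M (.var 0)]
      omega

/-- Lemma 5.2 (`RH-depth`): the handler-rewriting operation satisfies
`d(RH_{V,H}(⟨y⟩.P)) ≤ d(P) + d(H)`; in particular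
`d(rev handle(V)⟨y⟩.P with H) > d(RH_{V,H}(⟨y⟩.P))`. -/
theorem rw_depth (V : Tm) (H : Handler) (P P' : Cmd) (h : Rw V H P P') :
    P'.depth ≤ P.depth + H.depth ∧ P'.depth < (Cmd.rhandle V P H).depth := by
  have := rw_depth_aux V H P P' h
  simp only [Cmd.depth]
  omega
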